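/- arXiv:2501.08770 — 2 statements merged into one kernel-verified Lean document; each statement's English description precedes it below -/
import Mathlib

section
/- In the control framework: (i) for any (α^0,μ) ∈ 𝒜^0×C_μ such that the set D(α^0,μ) of optimal state-action flows is nonempty, the image set Γ(D(α^0,μ)) := ∪_{v∈D(α^0,μ)} Γ(v) is a nonempty convex subset of C_μ; (ii) the conditioning mapping Γ : 𝒱 → 2^{C_μ} has a closed graph: if v^n → v in 𝒱 and μ^n ∈ Γ(v^n) with μ^n → μ in C_μ, then μ ∈ Γ(v). -/
open MeasureTheory Filter Topology
open scoped NNReal ENNReal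

section ControlFramework

variable {S W A0 A1 : Type*}
variable [MetricSpace S] [CompactSpace S] [Nonempty S]
  [MeasurableSpace S] [BorelSpace S] [SecondCountableTopology S]
variable [Fintype W] [Nonempty W] [TopologicalSpace W] [DiscreteTopology W]
  [MeasurableSpace W] [BorelSpace W]
variable [MetricSpace A0] [CompactSpace A0] [Nonempty A0] [MeasurableSpace A0] [BorelSpace A0]
variable [MetricSpace A1] [CompactSpace A1] [Nonempty A1] [MeasurableSpace A1] [BorelSpace A1]
  [SecondCountableTopology A1]
variable {T : ℕ}

variable (P0c : Fin T → W → A0 → ProbabilityMeasure (S × A1) → ProbabilityMeasure W)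
variable (P1c : Fin T → S → W → A1 → ProbabilityMeasure (S × A1) → ProbabilityMeasure S)
variable (f1 : Fin T → S → W → A1 → ProbabilityMeasure (S × A1) → ℝ)
variable (g1 : S → W → ProbabilityMeasure S → ℝ)

/-- `π⁰_{t+1}(u,{u'};α⁰_t(u),μ_t(u)) = ∫_{A⁰} P⁰_{t+1}(u,a,μ_t(u),{u'}) α⁰_t(u)(da)`. -/
noncomputable def pi0c (t : Fin T) (u : W) (α : ProbabilityMeasure A0)
    (μ : ProbabilityMeasure (S × A1)) (u' : W) : ℝ :=
  ∫ a, ((P0c t u a μ : Measure W) {u'}).toReal ∂(α : Measure A0)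

/-- The minor player's value function by backward induction, indexed by the number `j` of
periods remaining before the horizon `T`: `Vauxc α⁰ μ j = V^{1,α⁰,μ}_{T-j}`, solving the
Bellman equation
`V_t(x,u) = max_{a∈A¹} { f¹_t(x,u,a,μ_t(u)) + ∫ V_{t+1}(x',u') π_{t+1}(x,u,a;α⁰_t(u),μ_t(u);dx',du') }`
with terminal condition `V_T(x,u) = g¹(x,u,μ_T(u))`. -/
noncomputable def Vauxc (α0 : Fin T → W → ProbabilityMeasure A0)
    (μf : (Fin T → W → ProbabilityMeasure (S × A1)) × (W → ProbabilityMeasure S)) :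
    ℕ → S → W → ℝ
  | 0, x, u => g1 x u (μf.2 u)
  | (j + 1), x, u =>
      if h : T - (j + 1) < T then
        ⨆ a : A1,
          (f1 ⟨T - (j + 1), h⟩ x u a (μf.1 ⟨T - (j + 1), h⟩ u) +
            ∑ u' : W, pi0c P0c ⟨T - (j + 1), h⟩ u (α0 ⟨T - (j + 1), h⟩ u)
                (μf.1 ⟨T - (j + 1), h⟩ u) u' *
              ∫ x', Vauxc α0 μf j x' u'
                ∂(P1c ⟨T - (j + 1), h⟩ x u a (μf.1 ⟨T - (j + 1), h⟩ u) : Measure S))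
      else g1 x u (μf.2 u)

/-- The minor player's value function `V^{1,α⁰,μ}_t` at calendar time `t`. -/
noncomputable def Vtimec (α0 : Fin T → W → ProbabilityMeasure A0)
    (μf : (Fin T → W → ProbabilityMeasure (S × A1)) × (W → ProbabilityMeasure S))
    (t : ℕ) (x : S) (u : W) : ℝ :=
  Vauxc P0c P1c f1 g1 α0 μf (T - t) x u

/-- The Bellman integrand at time `t`:
`Q_t(x,u,a) = f¹_t(x,u,a,μ_t(u)) + ∫ V^{1,α⁰,μ}_{t+1} dπ_{t+1}(x,u,a;α⁰_t(u),μ_t(u))`. -/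
noncomputable def Qfun (α0 : Fin T → W → ProbabilityMeasure A0)
    (μf : (Fin T → W → ProbabilityMeasure (S × A1)) × (W → ProbabilityMeasure S))
    (t : Fin T) (x : S) (u : W) (a : A1) : ℝ :=
  f1 t x u a (μf.1 t u) +
    ∑ u' : W, pi0c P0c t u (α0 t u) (μf.1 t u) u' *
      ∫ x', Vtimec P0c P1c f1 g1 α0 μf ((t : ℕ) + 1) x' u'
        ∂(P1c t x u a (μf.1 t u) : Measure S)

/-- `B(α⁰,μ)`: state-action flows giving full mass, at each time, to the set of
Bellman maximizers. -/
def Bset (α0 : Fin T → W → ProbabilityMeasure A0)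
    (μf : (Fin T → W → ProbabilityMeasure (S × A1)) × (W → ProbabilityMeasure S)) :
    Set ((Fin T → ProbabilityMeasure (S × W × A1)) × ProbabilityMeasure (S × W)) :=
  {v | ∀ t : Fin T,
    (v.1 t : Measure (S × W × A1))
      {q : S × W × A1 | Qfun P0c P1c f1 g1 α0 μf t q.1 q.2.1 q.2.2 =
        ⨆ a' : A1, Qfun P0c P1c f1 g1 α0 μf t q.1 q.2.1 a'} = 1}

/-- One-step transition applied to a test function `f` on `S × W`:
`(x,u,a) ↦ ∫_{S×W} f dπ_{t+1}(x,u,a;α⁰_t(u),μ_t(u))`. -/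
noncomputable def stepTest (α0 : Fin T → W → ProbabilityMeasure A0)
    (μf : (Fin T → W → ProbabilityMeasure (S × A1)) × (W → ProbabilityMeasure S))
    (t : Fin T) (f : S → W → ℝ) (q : S × W × A1) : ℝ :=
  ∑ u' : W, pi0c P0c t q.2.1 (α0 t q.2.1) (μf.1 t q.2.1) u' *
    ∫ x', f x' u' ∂(P1c t q.1 q.2.1 q.2.2 (μf.1 t q.2.1) : Measure S)

/-- `C(α⁰,μ)`: state-action flows consistent with the controlled dynamics and the
initial law `m₀*` (expressed through bounded continuous test functions). -/
def Cset (m0 : ProbabilityMeasure (S × W))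
    (α0 : Fin T → W → ProbabilityMeasure A0)
    (μf : (Fin T → W → ProbabilityMeasure (S × A1)) × (W → ProbabilityMeasure S)) :
    Set ((Fin T → ProbabilityMeasure (S × W × A1)) × ProbabilityMeasure (S × W)) :=
  {v |
    (∀ h : 0 < T, ∀ f : S → W → ℝ, Continuous (fun q : S × W => f q.1 q.2) →
      ∫ q : S × W × A1, f q.1 q.2.1 ∂(v.1 ⟨0, h⟩ : Measure (S × W × A1)) =
        ∫ q : S × W, f q.1 q.2 ∂(m0 : Measure (S × W))) ∧
    (∀ (t : Fin T) (h : (t : ℕ) + 1 < T),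
      ∀ f : S → W → ℝ, Continuous (fun q : S × W => f q.1 q.2) →
      ∫ q : S × W × A1, f q.1 q.2.1 ∂(v.1 ⟨(t : ℕ) + 1, h⟩ : Measure (S × W × A1)) =
        ∫ q, stepTest P0c P1c α0 μf t f q ∂(v.1 t : Measure (S × W × A1))) ∧
    (∀ h : 0 < T, ∀ f : S → W → ℝ, Continuous (fun q : S × W => f q.1 q.2) →
      ∫ q : S × W, f q.1 q.2 ∂(v.2 : Measure (S × W)) =
        ∫ q, stepTest P0c P1c α0 μf ⟨T - 1, Nat.sub_lt h Nat.one_pos⟩ f q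
          ∂(v.1 ⟨T - 1, Nat.sub_lt h Nat.one_pos⟩ : Measure (S × W × A1)))}

/-- `D(α⁰,μ) = B(α⁰,μ) ∩ C(α⁰,μ)`: the optimal state-action flows of the minor player. -/
def Dset (m0 : ProbabilityMeasure (S × W))
    (α0 : Fin T → W → ProbabilityMeasure A0)
    (μf : (Fin T → W → ProbabilityMeasure (S × A1)) × (W → ProbabilityMeasure S)) :
    Set ((Fin T → ProbabilityMeasure (S × W × A1)) × ProbabilityMeasure (S × W)) :=
  Bset P0c P1c f1 g1 α0 μf ∩ Cset P0c P1c m0 α0 μf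

/-- The conditioning mapping `Γ : 𝒱 → 2^{C_μ}`, sending a state-action flow `v` to all
mean-field flows `μ` obtained by disintegrating `v` over the major player's coordinate:
`v_t(dx,du,da) = μ_t(u)(dx,da) (v_t|_W)(du)` for `t < T` and
`v_T(dx,du) = μ_T(u)(dx) (v_T|_W)(du)`. -/
def Gammac (v : (Fin T → ProbabilityMeasure (S × W × A1)) × ProbabilityMeasure (S × W)) :
    Set ((Fin T → W → ProbabilityMeasure (S × A1)) × (W → ProbabilityMeasure S)) :=
  {μf | (∀ (t : Fin T) (u : W) (B : Set (S × A1)), MeasurableSet B →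
      (v.1 t : Measure (S × W × A1)) {q : S × W × A1 | (q.1, q.2.2) ∈ B ∧ q.2.1 = u} =
        (μf.1 t u : Measure (S × A1)) B *
          (v.1 t : Measure (S × W × A1)) {q : S × W × A1 | q.2.1 = u}) ∧
    (∀ (u : W) (B : Set S), MeasurableSet B →
      (v.2 : Measure (S × W)) (B ×ˢ ({u} : Set W)) =
        (μf.2 u : Measure S) B *
          (v.2 : Measure (S × W)) (Set.univ ×ˢ ({u} : Set W)))}

end ControlFramework

/-! `Γ(v)` disintegrates each `v_t` along the finite major coordinate: `μ_t(u)` is the law of the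
minor state-action pair on the fibre `{u}`, arbitrary when that fibre is null. Conditional laws
always exist, which gives nonemptiness.

Closed graph: fibres over a discrete `W` are clopen, so restricting to a fibre, pushing forward
and taking its mass are weakly continuous; the disintegration identity
`(v|_fibre).map π = v(fibre) • μ` is therefore an equation between continuous functions of
`(v, μ)` with values in a Hausdorff space.

Convexity: `D(α⁰,μ)` is convex, since optimality asks for full mass on a fixed set and the
dynamics are linear in `v`. The major state evolves without feedback from the minor one, so all
flows in `C(α⁰,μ)` have the same fibre masses, and mixing two flows with equal fibre masses
mixes their conditional laws with the same weights. For `T = 0` the constraints are void and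
any terminal family is realised by a flow concentrated on one major state. -/

namespace MeasureTheory

theorem FiniteMeasure.continuous_restrict_of_isClopen {X : Type*} [MeasurableSpace X]
    [TopologicalSpace X] [OpensMeasurableSpace X] {A : Set X} (hA : IsClopen A) :
    Continuous fun μ : FiniteMeasure X => μ.restrict A := by
  refine FiniteMeasure.continuous_iff_forall_continuous_integral.2 fun f => ?_
  have hcut : ∀ μ : FiniteMeasure X, ∫ x, f x ∂(μ.restrict A : Measure X) =
      ∫ x, (BoundedContinuousFunction.indicator A hA * f) x ∂(μ : Measure X) := by
    intro μ
    rw [FiniteMeasure.restrict_measure_eq, ← integral_indicator hA.isOpen.measurableSet]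
    congr 1 with x
    by_cases hx : x ∈ A <;> simp [hx]
  simp_rw [hcut]
  exact FiniteMeasure.continuous_integral_boundedContinuousFunction _

theorem integrable_of_integral_add_ne {X : Type*} [MeasurableSpace X] {ν : Measure X}
    {F ψ : X → ℝ} (hψ : Integrable ψ ν) (h : ∫ x, (F x + ψ x) ∂ν ≠ ∫ x, F x ∂ν) :
    Integrable F ν := by
  by_contra hF
  have hFψ : ¬Integrable (fun x => F x + ψ x) ν := fun hi => hF (by
    simpa [Pi.sub_def] using hi.sub hψ)
  exact h (by rw [integral_undef hF, integral_undef hFψ])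

theorem measure_preimage_singleton_eq_of_integral_comp_eq {X W : Type*} [MeasurableSpace X]
    [MeasurableSpace W] [MeasurableSingletonClass W] {ν ν' : Measure X} [IsFiniteMeasure ν]
    [IsFiniteMeasure ν'] {p : X → W} (hp : Measurable p)
    (h : ∀ φ : W → ℝ, ∫ x, φ (p x) ∂ν = ∫ x, φ (p x) ∂ν') (u : W) :
    ν (p ⁻¹' {u}) = ν' (p ⁻¹' {u}) := by
  have hind : (fun x => ({u} : Set W).indicator (1 : W → ℝ) (p x)) = (p ⁻¹' {u}).indicator 1 :=
    funext fun x => (Set.indicator_comp_right p).symm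
  have hu := h (({u} : Set W).indicator 1)
  rw [hind, integral_indicator_one (hp (measurableSet_singleton u)),
    integral_indicator_one (hp (measurableSet_singleton u))] at hu
  exact (ENNReal.toReal_eq_toReal_iff' (measure_ne_top _ _) (measure_ne_top _ _)).mp hu

noncomputable def ProbabilityMeasure.mix {X : Type*} [MeasurableSpace X] (a b : ℝ≥0)
    (hab : a + b = 1) (P Q : ProbabilityMeasure X) : ProbabilityMeasure X :=
  ⟨(a : ℝ≥0∞) • (P : Measure X) + (b : ℝ≥0∞) • (Q : Measure X), ⟨by
    simp [← ENNReal.coe_add, hab]⟩⟩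

namespace ProbabilityMeasure

variable {X : Type*} [MeasurableSpace X] {a b : ℝ≥0} (hab : a + b = 1)

@[simp]
theorem toMeasure_mix (P Q : ProbabilityMeasure X) :
    (mix a b hab P Q : Measure X) = (a : ℝ≥0∞) • (P : Measure X) + (b : ℝ≥0∞) • (Q : Measure X) :=
  rfl

theorem mix_apply_eq_one {P Q : ProbabilityMeasure X} {s : Set X} (hP : (P : Measure X) s = 1)
    (hQ : (Q : Measure X) s = 1) : (mix a b hab P Q : Measure X) s = 1 := by
  simp [hP, hQ, ← ENNReal.coe_add, hab]

theorem integral_mix {P Q : ProbabilityMeasure X} {F : X → ℝ} (hP : Integrable F P)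
    (hQ : Integrable F Q) :
    ∫ x, F x ∂(mix a b hab P Q : Measure X) =
      a * ∫ x, F x ∂(P : Measure X) + b * ∫ x, F x ∂(Q : Measure X) := by
  rw [toMeasure_mix, integral_add_measure (hP.smul_measure ENNReal.coe_ne_top)
    (hQ.smul_measure ENNReal.coe_ne_top), integral_smul_measure, integral_smul_measure]
  rfl

end ProbabilityMeasure

/-- `μ` is the law of `π` under `ν` conditioned on the event `A`; when `ν A = 0` every `μ`
qualifies. -/
def IsCondLaw {X E : Type*} [MeasurableSpace X] [MeasurableSpace E] (ν : Measure X) (π : X → E)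
    (A : Set X) (μ : Measure E) : Prop :=
  ∀ B, MeasurableSet B → ν (π ⁻¹' B ∩ A) = μ B * ν A

namespace IsCondLaw

variable {X E : Type*} [MeasurableSpace X] [MeasurableSpace E] {ν ν' : Measure X} {π : X → E}
  {A : Set X} {μ μ' : Measure E}

theorem of_measure_eq_zero (hA : ν A = 0) : IsCondLaw ν π A μ := fun _ _ => by
  rw [hA, mul_zero]
  exact measure_mono_null Set.inter_subset_right hA

theorem iff_map_restrict (hπ : Measurable π) :
    IsCondLaw ν π A μ ↔ (ν.restrict A).map π = ν A • μ := by
  simp only [IsCondLaw, Measure.ext_iff, Measure.smul_apply, smul_eq_mul]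
  refine forall₂_congr fun B hB => ?_
  rw [Measure.map_apply hπ hB, Measure.restrict_apply (hπ hB), mul_comm]

theorem smul_add_smul (h : IsCondLaw ν π A μ) (h' : IsCondLaw ν' π A μ') (hA : ν A = ν' A)
    {a b : ℝ≥0∞} (hab : a + b = 1) : IsCondLaw (a • ν + b • ν') π A (a • μ + b • μ') := by
  intro B hB
  simp only [Measure.add_apply, Measure.smul_apply, smul_eq_mul, h B hB, h' B hB, ← hA]
  calc a * (μ B * ν A) + b * (μ' B * ν A) = (a * μ B + b * μ' B) * ν A := by ring
    _ = (a * μ B + b * μ' B) * (a * ν A + b * ν A) := by rw [← add_mul, hab, one_mul]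

end IsCondLaw

theorem exists_isCondLaw {X E : Type*} [MeasurableSpace X] [MeasurableSpace E] [Nonempty E]
    (ν : ProbabilityMeasure X) {π : X → E} (hπ : Measurable π) (A : Set X) :
    ∃ μ : ProbabilityMeasure E, IsCondLaw ν π A μ := by
  by_cases hA : (ν : Measure X) A = 0
  · exact ⟨⟨Measure.dirac (Classical.arbitrary E), inferInstance⟩, .of_measure_eq_zero hA⟩
  · refine ⟨⟨((ν : Measure X) A)⁻¹ • ((ν : Measure X).restrict A).map π, ⟨?_⟩⟩, ?_⟩
    · rw [Measure.smul_apply, Measure.map_apply hπ .univ, Measure.restrict_apply (hπ .univ)]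
      simp [ENNReal.inv_mul_cancel hA (measure_ne_top _ _)]
    · rw [IsCondLaw.iff_map_restrict hπ]
      simp [smul_smul, ENNReal.mul_inv_cancel hA (measure_ne_top _ _)]

theorem isClosed_setOf_isCondLaw {X E : Type*} [MeasurableSpace X] [TopologicalSpace X]
    [OpensMeasurableSpace X] [MeasurableSpace E] [TopologicalSpace E] [BorelSpace E]
    [HasOuterApproxClosed E] {π : X → E} (hπ : Continuous π) {A : Set X} (hA : IsClopen A) :
    IsClosed {p : ProbabilityMeasure X × ProbabilityMeasure E | IsCondLaw p.1 π A p.2} := by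
  have hcont : Continuous fun ν : ProbabilityMeasure X => ν.toFiniteMeasure.restrict A :=
    (FiniteMeasure.continuous_restrict_of_isClopen hA).comp
      ProbabilityMeasure.toFiniteMeasure_continuous
  convert isClosed_eq ((FiniteMeasure.continuous_map hπ).comp (hcont.comp continuous_fst))
    ((FiniteMeasure.continuous_mass.comp (hcont.comp continuous_fst)).smul
      (ProbabilityMeasure.toFiniteMeasure_continuous.comp continuous_snd)) using 1
  ext p
  rw [Set.mem_ofPred_eq, IsCondLaw.iff_map_restrict hπ.measurable, Set.mem_ofPred_eq,
    ← FiniteMeasure.toMeasure_injective.eq_iff]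
  simp [FiniteMeasure.toMeasure_smul, ← Measure.coe_nnreal_smul,
    ProbabilityMeasure.ennreal_coeFn_eq_coeFn_toMeasure]

end MeasureTheory

section ControlFramework

variable {S W A0 A1 : Type*} [MeasurableSpace S] [MeasurableSpace W] [MeasurableSpace A0]
  [MeasurableSpace A1] {T : ℕ}
  (P0c : Fin T → W → A0 → ProbabilityMeasure (S × A1) → ProbabilityMeasure W)
  (P1c : Fin T → S → W → A1 → ProbabilityMeasure (S × A1) → ProbabilityMeasure S)
  (f1 : Fin T → S → W → A1 → ProbabilityMeasure (S × A1) → ℝ)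
  (g1 : S → W → ProbabilityMeasure S → ℝ) (m0 : ProbabilityMeasure (S × W))
  (α0 : Fin T → W → ProbabilityMeasure A0)
  (μf : (Fin T → W → ProbabilityMeasure (S × A1)) × (W → ProbabilityMeasure S))

local notation "𝒱" => (Fin T → ProbabilityMeasure (S × W × A1)) × ProbabilityMeasure (S × W)
local notation "𝒞" => (Fin T → W → ProbabilityMeasure (S × A1)) × (W → ProbabilityMeasure S)

theorem mem_Gammac_iff {v : 𝒱} {μ : 𝒞} :
    μ ∈ Gammac v ↔
      (∀ t u, IsCondLaw (v.1 t : Measure (S × W × A1)) (fun q => (q.1, q.2.2)) {q | q.2.1 = u}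
        (μ.1 t u)) ∧
      ∀ u, IsCondLaw (v.2 : Measure (S × W)) Prod.fst (Set.univ ×ˢ {u}) (μ.2 u) := by
  refine and_congr Iff.rfl (forall_congr' fun u => forall₂_congr fun B _ => ?_)
  rw [Set.univ_prod, Set.prod_eq]

theorem Gammac_nonempty [Nonempty S] [Nonempty A1] (v : 𝒱) : (Gammac v).Nonempty := by
  choose μ hμ using fun t (u : W) => exists_isCondLaw (v.1 t)
    (measurable_fst.prodMk (measurable_snd.comp measurable_snd)) {q : S × W × A1 | q.2.1 = u}
  choose μ' hμ' using fun u : W => exists_isCondLaw v.2 measurable_fst (Set.univ ×ˢ {u})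
  exact ⟨(μ, μ'), mem_Gammac_iff.2 ⟨hμ, hμ'⟩⟩

theorem exists_Gammac_of_eq_zero [Nonempty W] [MeasurableSingletonClass W] (hT : T = 0)
    (μ : 𝒞) : ∃ v : 𝒱, μ ∈ Gammac v := by
  subst hT
  obtain ⟨u₀⟩ := ‹Nonempty W›
  have hmeas : Measurable fun s : S => (s, u₀) := measurable_id.prodMk measurable_const
  refine ⟨(finZeroElim, (μ.2 u₀).map hmeas.aemeasurable),
    mem_Gammac_iff.2 ⟨finZeroElim, fun u B hB => ?_⟩⟩
  have hset : MeasurableSet (Set.univ ×ˢ {u} : Set (S × W)) :=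
    MeasurableSet.univ.prod (.singleton u)
  simp only [ProbabilityMeasure.toMeasure_map, Measure.map_apply hmeas hset,
    Measure.map_apply hmeas ((measurable_fst hB).inter hset)]
  by_cases hu : u₀ = u
  · subst hu
    simp [Set.preimage]
  · simp [Set.preimage, hu]

theorem mem_Dset_of_eq_zero [MetricSpace S] [Fintype W] [TopologicalSpace W] (hT : T = 0)
    (v : 𝒱) : v ∈ Dset P0c P1c f1 g1 m0 α0 μf := by
  subst hT
  exact ⟨finZeroElim, fun h => absurd h (lt_irrefl 0), finZeroElim,
    fun h => absurd h (lt_irrefl 0)⟩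

noncomputable def mixFlow (a b : ℝ≥0) (hab : a + b = 1) (v w : 𝒱) : 𝒱 :=
  (fun t => (v.1 t).mix a b hab (w.1 t), v.2.mix a b hab w.2)

noncomputable def mixMeanField (a b : ℝ≥0) (hab : a + b = 1) (x y : 𝒞) : 𝒞 :=
  (fun t u => (x.1 t u).mix a b hab (y.1 t u), fun u => (x.2 u).mix a b hab (y.2 u))

section

variable [Fintype W]

theorem stepTest_comp_major (t : Fin T) (φ : W → ℝ) (q : S × W × A1) :
    stepTest P0c P1c α0 μf t (fun _ u => φ u) q =
      ∑ u', pi0c P0c t q.2.1 (α0 t q.2.1) (μf.1 t q.2.1) u' * φ u' := by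
  simp [stepTest]

theorem stepTest_add_one [TopologicalSpace S] [CompactSpace S] [OpensMeasurableSpace S]
    (t : Fin T) {f : S → W → ℝ} (hf : ∀ u, Continuous fun x => f x u) (q : S × W × A1) :
    stepTest P0c P1c α0 μf t (fun x u => f x u + 1) q =
      stepTest P0c P1c α0 μf t f q + ∑ u', pi0c P0c t q.2.1 (α0 t q.2.1) (μf.1 t q.2.1) u' := by
  simp only [stepTest, ← Finset.sum_add_distrib, ← mul_add_one]
  congr 1 with u'
  rw [integral_add ((hf u').integrable_of_hasCompactSupport (.of_compactSpace _))
    (integrable_const 1)]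
  simp

/-- The kernels are arbitrary functions, so `stepTest f` need not even be measurable. But
`stepTest (f + 1) - stepTest f` depends only on the major state, and if `stepTest f` were not
integrable both sides of the consistency equation for `f` and `f + 1` would be junk `0`. -/
theorem integrable_stepTest_of_forall_integral_eq [TopologicalSpace S] [CompactSpace S]
    [OpensMeasurableSpace S] [TopologicalSpace W] [MeasurableSingletonClass W]
    {t : Fin T} {ν : Measure (S × W × A1)} [IsFiniteMeasure ν] {Ω : Type*} [MeasurableSpace Ω]
    [TopologicalSpace Ω] [CompactSpace Ω] [OpensMeasurableSpace Ω] {ρ : ProbabilityMeasure Ω}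
    {e : Ω → S × W} (he : Continuous e)
    (hρ : ∀ g : S → W → ℝ, Continuous (fun q : S × W => g q.1 q.2) →
      ∫ q, stepTest P0c P1c α0 μf t g q ∂ν = ∫ ω, g (e ω).1 (e ω).2 ∂(ρ : Measure Ω))
    {f : S → W → ℝ} (hf : Continuous fun q : S × W => f q.1 q.2) :
    Integrable (stepTest P0c P1c α0 μf t f) ν := by
  have hfu : ∀ u, Continuous fun x => f x u := fun u =>
    hf.comp (continuous_id.prodMk continuous_const)
  have hψ : Integrable (fun q : S × W × A1 =>
      ∑ u', pi0c P0c t q.2.1 (α0 t q.2.1) (μf.1 t q.2.1) u') ν :=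
    Integrable.comp_measurable (f := fun q : S × W × A1 => q.2.1)
      (g := fun u => ∑ u', pi0c P0c t u (α0 t u) (μf.1 t u) u') .of_finite
      (measurable_fst.comp measurable_snd)
  refine integrable_of_integral_add_ne hψ fun h => ?_
  simp_rw [← stepTest_add_one P0c P1c α0 μf t hfu] at h
  rw [hρ _ (hf.add continuous_const), hρ _ hf, integral_add (f := fun ω => f (e ω).1 (e ω).2)
    ((hf.comp he).integrable_of_hasCompactSupport (.of_compactSpace _)) (integrable_const 1)] at h
  simp at h

variable [MetricSpace S] [TopologicalSpace W] [DiscreteTopology W]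

theorem integral_comp_major_eq_of_mem_Cset {v w : 𝒱} (hv : v ∈ Cset P0c P1c m0 α0 μf)
    (hw : w ∈ Cset P0c P1c m0 α0 μf) (t : Fin T) (φ : W → ℝ) :
    ∫ q, φ q.2.1 ∂(v.1 t : Measure (S × W × A1)) =
      ∫ q, φ q.2.1 ∂(w.1 t : Measure (S × W × A1)) := by
  have hφ : ∀ φ : W → ℝ, Continuous fun q : S × W => φ q.2 := fun φ =>
    continuous_of_discreteTopology.comp continuous_snd
  obtain ⟨k, hk⟩ := t
  induction k generalizing φ with
  | zero => exact (hv.1 hk (fun _ u => φ u) (hφ φ)).trans (hw.1 hk (fun _ u => φ u) (hφ φ)).symm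
  | succ k ih =>
    let t : Fin T := ⟨k, by omega⟩
    have hv' := hv.2.1 t hk (fun _ u => φ u) (hφ φ)
    have hw' := hw.2.1 t hk (fun _ u => φ u) (hφ φ)
    simp only [stepTest_comp_major] at hv' hw'
    rw [hv', hw']
    exact ih (fun u => ∑ u', pi0c P0c t u (α0 t u) (μf.1 t u) u' * φ u') t.isLt

theorem integral_comp_major_terminal_eq_of_mem_Cset (hT : 0 < T) {v w : 𝒱}
    (hv : v ∈ Cset P0c P1c m0 α0 μf) (hw : w ∈ Cset P0c P1c m0 α0 μf) (φ : W → ℝ) :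
    ∫ q, φ q.2 ∂(v.2 : Measure (S × W)) = ∫ q, φ q.2 ∂(w.2 : Measure (S × W)) := by
  have hφ : Continuous fun q : S × W => φ q.2 := continuous_of_discreteTopology.comp continuous_snd
  have hv' := hv.2.2 hT (fun _ u => φ u) hφ
  have hw' := hw.2.2 hT (fun _ u => φ u) hφ
  simp only [stepTest_comp_major] at hv' hw'
  rw [hv', hw']
  exact integral_comp_major_eq_of_mem_Cset P0c P1c m0 α0 μf hv hw _
    (fun u => ∑ u', pi0c P0c _ u (α0 _ u) (μf.1 _ u) u' * φ u')

theorem mixFlow_mem_Cset [CompactSpace S] [BorelSpace S] [BorelSpace W] [MetricSpace A1]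
    [CompactSpace A1] [BorelSpace A1] {v w : 𝒱} (hv : v ∈ Cset P0c P1c m0 α0 μf)
    (hw : w ∈ Cset P0c P1c m0 α0 μf) {a b : ℝ≥0} (hab : a + b = 1) :
    mixFlow a b hab v w ∈ Cset P0c P1c m0 α0 μf := by
  have hab' : (a : ℝ) + b = 1 := by exact_mod_cast hab
  have hint : ∀ {f : S → W → ℝ}, Continuous (fun q : S × W => f q.1 q.2) →
      ∀ ν : ProbabilityMeasure (S × W × A1),
        Integrable (fun q : S × W × A1 => f q.1 q.2.1) (ν : Measure (S × W × A1)) :=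
    fun hf _ => (hf.comp (continuous_fst.prodMk (continuous_fst.comp continuous_snd))
      ).integrable_of_hasCompactSupport (.of_compactSpace _)
  refine ⟨fun h f hf => ?_, fun t h f hf => ?_, fun h f hf => ?_⟩
  · rw [mixFlow, ProbabilityMeasure.integral_mix hab (hint hf _) (hint hf _), hv.1 h f hf,
      hw.1 h f hf, ← add_mul, hab', one_mul]
  · have hstep : ∀ {z : 𝒱}, z ∈ Cset P0c P1c m0 α0 μf →
        Integrable (stepTest P0c P1c α0 μf t f) (z.1 t : Measure (S × W × A1)) := fun hz =>
      integrable_stepTest_of_forall_integral_eq P0c P1c α0 μf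
        (continuous_fst.prodMk (continuous_fst.comp continuous_snd))
        (fun g hg => (hz.2.1 t h g hg).symm) hf
    rw [mixFlow, ProbabilityMeasure.integral_mix hab (hint hf _) (hint hf _),
      ProbabilityMeasure.integral_mix hab (hstep hv) (hstep hw), hv.2.1 t h f hf, hw.2.1 t h f hf]
  · have hstep : ∀ {z : 𝒱}, z ∈ Cset P0c P1c m0 α0 μf →
        Integrable (stepTest P0c P1c α0 μf _ f) (z.1 ⟨T - 1, by omega⟩ : Measure (S × W × A1)) :=
      fun hz => integrable_stepTest_of_forall_integral_eq P0c P1c α0 μf continuous_id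
        (fun g hg => (hz.2.2 h g hg).symm) hf
    have hf' : ∀ ν : ProbabilityMeasure (S × W), Integrable (fun q : S × W => f q.1 q.2) ν :=
      fun _ => hf.integrable_of_hasCompactSupport (.of_compactSpace _)
    rw [mixFlow, ProbabilityMeasure.integral_mix hab (hf' _) (hf' _),
      ProbabilityMeasure.integral_mix hab (hstep hv) (hstep hw), hv.2.2 h f hf, hw.2.2 h f hf]

theorem mixFlow_mem_Dset [CompactSpace S] [BorelSpace S] [BorelSpace W] [MetricSpace A1]
    [CompactSpace A1] [BorelSpace A1] {v w : 𝒱} (hv : v ∈ Dset P0c P1c f1 g1 m0 α0 μf)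
    (hw : w ∈ Dset P0c P1c f1 g1 m0 α0 μf) {a b : ℝ≥0} (hab : a + b = 1) :
    mixFlow a b hab v w ∈ Dset P0c P1c f1 g1 m0 α0 μf :=
  ⟨fun t => ProbabilityMeasure.mix_apply_eq_one hab (hv.1 t) (hw.1 t),
    mixFlow_mem_Cset P0c P1c m0 α0 μf hv.2 hw.2 hab⟩

theorem mixMeanField_mem_Gammac [BorelSpace W] (hT : 0 < T) {v w : 𝒱}
    (hv : v ∈ Cset P0c P1c m0 α0 μf) (hw : w ∈ Cset P0c P1c m0 α0 μf) {x y : 𝒞}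
    (hx : x ∈ Gammac v) (hy : y ∈ Gammac w) {a b : ℝ≥0} (hab : a + b = 1) :
    mixMeanField a b hab x y ∈ Gammac (mixFlow a b hab v w) := by
  rw [mem_Gammac_iff] at hx hy ⊢
  have hab' : (a : ℝ≥0∞) + b = 1 := by exact_mod_cast hab
  refine ⟨fun t u => (hx.1 t u).smul_add_smul (hy.1 t u) ?_ hab',
    fun u => (hx.2 u).smul_add_smul (hy.2 u) ?_ hab'⟩
  · exact measure_preimage_singleton_eq_of_integral_comp_eq (measurable_fst.comp measurable_snd)
      (integral_comp_major_eq_of_mem_Cset P0c P1c m0 α0 μf hv hw t) u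
  · rw [Set.univ_prod]
    exact measure_preimage_singleton_eq_of_integral_comp_eq measurable_snd
      (integral_comp_major_terminal_eq_of_mem_Cset P0c P1c m0 α0 μf hT hv hw) u

end

theorem mem_Gammac_of_tendsto [MetricSpace S] [SecondCountableTopology S] [BorelSpace S]
    [TopologicalSpace W] [DiscreteTopology W] [BorelSpace W]
    [MetricSpace A1] [SecondCountableTopology A1] [BorelSpace A1] {ι : Type*} {l : Filter ι}
    [l.NeBot] {vs : ι → 𝒱} {v : 𝒱} {μs : ι → 𝒞} {μ : 𝒞} (hv : Tendsto vs l (𝓝 v))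
    (hμ : Tendsto μs l (𝓝 μ)) (h : ∀ᶠ i in l, μs i ∈ Gammac (vs i)) : μ ∈ Gammac v := by
  simp_rw [mem_Gammac_iff] at h ⊢
  refine ⟨fun t u => ?_, fun u => ?_⟩
  · exact (isClosed_setOf_isCondLaw (continuous_fst.prodMk (continuous_snd.comp continuous_snd))
      ((isClopen_discrete {u}).preimage (continuous_fst.comp continuous_snd))).mem_of_tendsto
      ((hv.fst_nhds.apply_nhds t).prodMk_nhds ((hμ.fst_nhds.apply_nhds t).apply_nhds u))
      (h.mono fun _ hi => hi.1 t u)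
  · exact (isClosed_setOf_isCondLaw continuous_fst
      (isClopen_univ.prod (isClopen_discrete {u}))).mem_of_tendsto
      (hv.snd_nhds.prodMk_nhds (hμ.snd_nhds.apply_nhds u)) (h.mono fun _ hi => hi.2 u)

end ControlFramework

theorem gammac_convex_and_closedGraph_general
    {S W A0 A1 : Type*}
    [MetricSpace S] [CompactSpace S] [Nonempty S]
    [MeasurableSpace S] [BorelSpace S]
    [Fintype W] [Nonempty W] [TopologicalSpace W] [DiscreteTopology W]
    [MeasurableSpace W] [BorelSpace W]
    [MeasurableSpace A0]
    [MetricSpace A1] [CompactSpace A1] [Nonempty A1] [MeasurableSpace A1] [BorelSpace A1]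
    {T : ℕ}
    (P0c : Fin T → W → A0 → ProbabilityMeasure (S × A1) → ProbabilityMeasure W)
    (P1c : Fin T → S → W → A1 → ProbabilityMeasure (S × A1) → ProbabilityMeasure S)
    (f1 : Fin T → S → W → A1 → ProbabilityMeasure (S × A1) → ℝ)
    (g1 : S → W → ProbabilityMeasure S → ℝ)
    (m0 : ProbabilityMeasure (S × W))
 :
    -- (i) nonemptiness and convexity of Γ(D(α⁰,μ))
    (∀ (α0 : Fin T → W → ProbabilityMeasure A0)
       (μf : (Fin T → W → ProbabilityMeasure (S × A1)) × (W → ProbabilityMeasure S)),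
       (Dset P0c P1c f1 g1 m0 α0 μf).Nonempty →
       (⋃ v ∈ Dset P0c P1c f1 g1 m0 α0 μf, Gammac v).Nonempty ∧
       (∀ x ∈ ⋃ v ∈ Dset P0c P1c f1 g1 m0 α0 μf, Gammac v,
        ∀ y ∈ ⋃ v ∈ Dset P0c P1c f1 g1 m0 α0 μf, Gammac v,
        ∀ a b : ℝ≥0, a + b = 1 →
          ∃ z ∈ ⋃ v ∈ Dset P0c P1c f1 g1 m0 α0 μf, Gammac v,
            (∀ (t : Fin T) (u : W), (z.1 t u : Measure (S × A1)) =
              (a : ℝ≥0∞) • (x.1 t u : Measure (S × A1)) +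
                (b : ℝ≥0∞) • (y.1 t u : Measure (S × A1))) ∧
            (∀ u : W, (z.2 u : Measure S) =
              (a : ℝ≥0∞) • (x.2 u : Measure S) + (b : ℝ≥0∞) • (y.2 u : Measure S)))) ∧
    -- (ii) closed graph of Γ
    (∀ (vseq : ℕ → (Fin T → ProbabilityMeasure (S × W × A1)) × ProbabilityMeasure (S × W))
       (v : (Fin T → ProbabilityMeasure (S × W × A1)) × ProbabilityMeasure (S × W))
       (μseq : ℕ → (Fin T → W → ProbabilityMeasure (S × A1)) × (W → ProbabilityMeasure S))
       (μf : (Fin T → W → ProbabilityMeasure (S × A1)) × (W → ProbabilityMeasure S)),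
       Tendsto vseq atTop (𝓝 v) →
       (∀ n, μseq n ∈ Gammac (vseq n)) →
       Tendsto μseq atTop (𝓝 μf) →
       μf ∈ Gammac v) := by
  refine ⟨fun α0 μf ⟨v, hv⟩ => ⟨(Gammac_nonempty v).mono (Set.subset_biUnion_of_mem hv), ?_⟩,
    fun vseq v μseq μf hv hmem hμ => mem_Gammac_of_tendsto hv hμ (.of_forall hmem)⟩
  intro x hx y hy a b hab
  obtain ⟨vx, hvx, hx⟩ := Set.mem_iUnion₂.1 hx
  obtain ⟨vy, hvy, hy⟩ := Set.mem_iUnion₂.1 hy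
  refine ⟨mixMeanField a b hab x y, ?_, fun _ _ => rfl, fun _ => rfl⟩
  obtain hT | hT := T.eq_zero_or_pos
  · obtain ⟨v, hv⟩ := exists_Gammac_of_eq_zero hT (mixMeanField a b hab x y)
    exact Set.mem_biUnion (mem_Dset_of_eq_zero P0c P1c f1 g1 m0 α0 μf hT v) hv
  · exact Set.mem_biUnion (mixFlow_mem_Dset P0c P1c f1 g1 m0 α0 μf hvx hvy hab)
      (mixMeanField_mem_Gammac P0c P1c m0 α0 μf hT hvx.2 hvy.2 hx hy hab)

/-- STATEMENT 16: In the control framework: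
(i) for any `(α⁰,μ) ∈ 𝒜⁰ × C_μ` such that the set `D(α⁰,μ)` of optimal state-action flows
is nonempty, the image set `Γ(D(α⁰,μ)) = ⋃_{v ∈ D(α⁰,μ)} Γ(v)` is a nonempty convex subset
of `C_μ` (convexity expressed through convex combinations of the underlying measures);
(ii) the conditioning mapping `Γ : 𝒱 → 2^{C_μ}` has a closed graph: if `vⁿ → v` in `𝒱` and
`μⁿ ∈ Γ(vⁿ)` with `μⁿ → μ` in `C_μ`, then `μ ∈ Γ(v)`. -/
theorem gammac_convex_and_closedGraph
    {S W A0 A1 : Type*}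
    [MetricSpace S] [CompactSpace S] [Nonempty S]
    [MeasurableSpace S] [BorelSpace S] [SecondCountableTopology S]
    [Fintype W] [Nonempty W] [TopologicalSpace W] [DiscreteTopology W]
    [MeasurableSpace W] [BorelSpace W]
    [MetricSpace A0] [CompactSpace A0] [Nonempty A0] [MeasurableSpace A0] [BorelSpace A0]
    [MetricSpace A1] [CompactSpace A1] [Nonempty A1] [MeasurableSpace A1] [BorelSpace A1]
    [SecondCountableTopology A1]
    {T : ℕ}
    (P0c : Fin T → W → A0 → ProbabilityMeasure (S × A1) → ProbabilityMeasure W)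
    (P1c : Fin T → S → W → A1 → ProbabilityMeasure (S × A1) → ProbabilityMeasure S)
    (f1 : Fin T → S → W → A1 → ProbabilityMeasure (S × A1) → ℝ)
    (g1 : S → W → ProbabilityMeasure S → ℝ)
    (m0 : ProbabilityMeasure (S × W))
 :
    -- (i) nonemptiness and convexity of Γ(D(α⁰,μ))
    (∀ (α0 : Fin T → W → ProbabilityMeasure A0)
       (μf : (Fin T → W → ProbabilityMeasure (S × A1)) × (W → ProbabilityMeasure S)),
       (Dset P0c P1c f1 g1 m0 α0 μf).Nonempty →
       (⋃ v ∈ Dset P0c P1c f1 g1 m0 α0 μf, Gammac v).Nonempty ∧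
       (∀ x ∈ ⋃ v ∈ Dset P0c P1c f1 g1 m0 α0 μf, Gammac v,
        ∀ y ∈ ⋃ v ∈ Dset P0c P1c f1 g1 m0 α0 μf, Gammac v,
        ∀ a b : ℝ≥0, a + b = 1 →
          ∃ z ∈ ⋃ v ∈ Dset P0c P1c f1 g1 m0 α0 μf, Gammac v,
            (∀ (t : Fin T) (u : W), (z.1 t u : Measure (S × A1)) =
              (a : ℝ≥0∞) • (x.1 t u : Measure (S × A1)) +
                (b : ℝ≥0∞) • (y.1 t u : Measure (S × A1))) ∧
            (∀ u : W, (z.2 u : Measure S) =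
              (a : ℝ≥0∞) • (x.2 u : Measure S) + (b : ℝ≥0∞) • (y.2 u : Measure S)))) ∧
    -- (ii) closed graph of Γ
    (∀ (vseq : ℕ → (Fin T → ProbabilityMeasure (S × W × A1)) × ProbabilityMeasure (S × W))
       (v : (Fin T → ProbabilityMeasure (S × W × A1)) × ProbabilityMeasure (S × W))
       (μseq : ℕ → (Fin T → W → ProbabilityMeasure (S × A1)) × (W → ProbabilityMeasure S))
       (μf : (Fin T → W → ProbabilityMeasure (S × A1)) × (W → ProbabilityMeasure S)),
       Tendsto vseq atTop (𝓝 v) →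
       (∀ n, μseq n ∈ Gammac (vseq n)) →
       Tendsto μseq atTop (𝓝 μf) →
       μf ∈ Gammac v) :=
  gammac_convex_and_closedGraph_general P0c P1c f1 g1 m0
end

section
/- In the control framework, under the continuity assumptions on P^0 (in (a,μ)) and on P^1, f^1 and g^1, if (α^{0,n},μ^n) → (α^0,μ) in 𝒜^0×C_μ, then for each t ∈ 𝕋 the minor player's value functions converge uniformly: sup_{(x,u)∈S×W} |V^{1,α^{0,n},μ^n}_t(x,u) − V^{1,α^0,μ}_t(x,u)| → 0 as n → ∞. -/
/-!
Backward induction preserves joint continuity in the data. The terminal value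
`g¹(x, u, μ_T(u))` is continuous in `(α⁰, μ, x)`; if `V_{t+1}` is, then so is the Bellman
integrand `f¹_t + ∫ V_{t+1} dπ_{t+1}`, because integrating a jointly continuous function against
a weakly continuous family of probability measures on a compact space is continuous, and so is
its maximum over the compact action space `A¹`. Since `W` is discrete, `V_t` is then jointly
continuous in `((α⁰, μ), (x, u))`, and a jointly continuous family on the compact space `S × W`
converges uniformly along any convergent sequence of parameters.
-/

open MeasureTheory Filter Topology
open scoped NNReal ENNReal

namespace MeasureTheory.ProbabilityMeasure

variable {X : Type*} [TopologicalSpace X] [MeasurableSpace X] [OpensMeasurableSpace X]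

theorem continuous_measureReal_of_isClopen {s : Set X} (hs : IsClopen s) :
    Continuous fun ρ : ProbabilityMeasure X => (ρ : Measure X).real s := by
  simpa [integral_indicator_one hs.isOpen.measurableSet] using
    continuous_integral_boundedContinuousFunction (BoundedContinuousFunction.indicator s hs)

variable [CompactSpace X]

theorem continuous_integral_prod_continuousMap :
    Continuous fun p : C(X, ℝ) × ProbabilityMeasure X => ∫ x, p.1 x ∂(p.2 : Measure X) := by
  refine continuous_prod_of_continuous_lipschitzWith _ 1
    continuous_integral_continuousMap fun ρ => .of_dist_le_mul fun g g' => ?_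
  calc dist (∫ x, g x ∂(ρ : Measure X)) (∫ x, g' x ∂(ρ : Measure X))
      = ‖∫ x, (g - g') x ∂(ρ : Measure X)‖ := by
        have hint (h : C(X, ℝ)) : Integrable h (ρ : Measure X) :=
          h.continuous.integrable_of_hasCompactSupport (.of_compactSpace _)
        rw [dist_eq_norm, ← integral_sub (hint g) (hint g')]
        rfl
    _ ≤ ‖g - g'‖ * (ρ : Measure X).real Set.univ :=
        norm_integral_le_of_norm_le_const (.of_forall (g - g').norm_coe_le_norm)
    _ = (1 : ℝ≥0) * dist g g' := by simp [dist_eq_norm]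

theorem continuous_parametric_integral {Y : Type*} [TopologicalSpace Y]
    {F : Y → X → ℝ} (hF : Continuous fun p : Y × X => F p.1 p.2)
    {ρ : Y → ProbabilityMeasure X} (hρ : Continuous ρ) : Continuous fun y => ∫ x, F y x ∂(ρ y : Measure X) :=
  continuous_integral_prod_continuousMap.comp
    ((ContinuousMap.curry ⟨_, hF⟩).continuous.prodMk hρ)

end MeasureTheory.ProbabilityMeasure

theorem Continuous.ciSup_of_compactSpace {Y A : Type*} [TopologicalSpace Y] [TopologicalSpace A]
    [CompactSpace A] {f : Y → A → ℝ} (hf : Continuous fun p : Y × A => f p.1 p.2) :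
    Continuous fun y => ⨆ a, f y a := by
  simpa [iSup, Set.image_univ] using isCompact_univ.continuous_sSup hf

theorem Continuous.tendstoUniformly_of_tendsto {ι Y P E : Type*} [TopologicalSpace Y]
    [TopologicalSpace P] [CompactSpace P] [UniformSpace E] {F : Y → P → E}
    (hF : Continuous fun p : Y × P => F p.1 p.2) {l : Filter ι} {y : ι → Y} {y₀ : Y}
    (hy : Tendsto y l (𝓝 y₀)) : TendstoUniformly (fun i => F (y i)) (F y₀) l :=
  ContinuousMap.tendsto_iff_tendstoUniformly.1
    (((ContinuousMap.curry ⟨_, hF⟩).continuous.tendsto y₀).comp hy)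

abbrev MajorControl (T : ℕ) (W A0 : Type*) [MeasurableSpace A0] :=
  Fin T → W → ProbabilityMeasure A0

abbrev MeanFieldFlow (T : ℕ) (S W A1 : Type*) [MeasurableSpace S] [MeasurableSpace A1] :=
  (Fin T → W → ProbabilityMeasure (S × A1)) × (W → ProbabilityMeasure S)

section ValueFunctionContinuity

variable {S W A0 A1 : Type*}
  [TopologicalSpace S] [MeasurableSpace S]
  [TopologicalSpace W] [DiscreteTopology W] [MeasurableSpace W] [OpensMeasurableSpace W]
  [TopologicalSpace A0] [CompactSpace A0] [MeasurableSpace A0] [OpensMeasurableSpace A0]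
  [TopologicalSpace A1] [MeasurableSpace A1] [OpensMeasurableSpace (S × A1)]
  {T : ℕ}
  (P0c : Fin T → W → A0 → ProbabilityMeasure (S × A1) → ProbabilityMeasure W)
  (P1c : Fin T → S → W → A1 → ProbabilityMeasure (S × A1) → ProbabilityMeasure S)
  (f1 : Fin T → S → W → A1 → ProbabilityMeasure (S × A1) → ℝ)
  (g1 : S → W → ProbabilityMeasure S → ℝ)

theorem continuous_pi0c
    (hP0c : ∀ (t : Fin T) (u : W), Continuous fun z : A0 × ProbabilityMeasure (S × A1) =>
      P0c t u z.1 z.2)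
    (t : Fin T) (u u' : W) :
    Continuous fun z : ProbabilityMeasure A0 × ProbabilityMeasure (S × A1) =>
      pi0c P0c t u z.1 z.2 u' :=
  ProbabilityMeasure.continuous_parametric_integral
    (F := fun z a => ((P0c t u a z.2 : Measure W) {u'}).toReal)
    ((ProbabilityMeasure.continuous_measureReal_of_isClopen (isClopen_discrete {u'})).comp
      ((hP0c t u).comp₂ (by fun_prop) (by fun_prop)))
    continuous_fst

variable [CompactSpace S] [OpensMeasurableSpace S] [CompactSpace A1]

theorem continuous_Vauxc [Fintype W]
    (hP1c : ∀ (t : Fin T) (u : W), Continuous fun z : S × A1 × ProbabilityMeasure (S × A1) =>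
      P1c t z.1 u z.2.1 z.2.2)
    (hP0c : ∀ (t : Fin T) (u : W), Continuous fun z : A0 × ProbabilityMeasure (S × A1) =>
      P0c t u z.1 z.2)
    (hf1 : ∀ (t : Fin T) (u : W), Continuous fun z : S × A1 × ProbabilityMeasure (S × A1) =>
      f1 t z.1 u z.2.1 z.2.2)
    (hg1 : ∀ u : W, Continuous fun z : S × ProbabilityMeasure S => g1 z.1 u z.2)
    (j : ℕ) (u : W) :
    Continuous fun p : (MajorControl T W A0 × MeanFieldFlow T S W A1) × S =>
      Vauxc P0c P1c f1 g1 p.1.1 p.1.2 j p.2 u := by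
  have hterminal (u : W) :
      Continuous fun p : (MajorControl T W A0 × MeanFieldFlow T S W A1) × S =>
        g1 p.2 u (p.1.2.2 u) :=
    (hg1 u).comp₂ (by fun_prop) (by fun_prop)
  induction j generalizing u with
  | zero => simpa only [Vauxc] using hterminal u
  | succ j ih =>
    by_cases h : T - (j + 1) < T
    · simp only [Vauxc, dif_pos h]
      set t : Fin T := ⟨T - (j + 1), h⟩
      apply Continuous.ciSup_of_compactSpace
      refine .add ?_ (continuous_finsetSum _ fun u' _ => .mul ?_ ?_)
      · exact (hf1 t u).comp₃ (by fun_prop) (by fun_prop) (by fun_prop)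
      · exact (continuous_pi0c P0c hP0c t u u').comp₂ (by fun_prop) (by fun_prop)
      · refine ProbabilityMeasure.continuous_parametric_integral ?_ ?_
        · exact (ih u').comp (continuous_fst.fst.fst.prodMk continuous_snd)
        · exact (hP1c t u).comp₃ (by fun_prop) (by fun_prop) (by fun_prop)
    · simpa only [Vauxc, dif_neg h] using hterminal u

end ValueFunctionContinuity

theorem minor_value_functions_converge_uniformly_general
    {S W A0 A1 : Type*}
    [MetricSpace S] [CompactSpace S]
    [MeasurableSpace S] [BorelSpace S]
    [Fintype W] [TopologicalSpace W] [DiscreteTopology W]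
    [MeasurableSpace W] [BorelSpace W]
    [MetricSpace A0] [CompactSpace A0] [MeasurableSpace A0] [BorelSpace A0]
    [MetricSpace A1] [CompactSpace A1] [MeasurableSpace A1] [BorelSpace A1]
    [SecondCountableTopology A1]
    {T : ℕ}
    (P0c : Fin T → W → A0 → ProbabilityMeasure (S × A1) → ProbabilityMeasure W)
    (P1c : Fin T → S → W → A1 → ProbabilityMeasure (S × A1) → ProbabilityMeasure S)
    (f1 : Fin T → S → W → A1 → ProbabilityMeasure (S × A1) → ℝ)
    (g1 : S → W → ProbabilityMeasure S → ℝ)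
    -- continuity of the minor player's transition kernel in (x,a,μ)
    (hP1c : ∀ (t : Fin T) (u : W), Continuous fun z : S × A1 × ProbabilityMeasure (S × A1) =>
      P1c t z.1 u z.2.1 z.2.2)
    -- continuity of the major player's transition kernel in (a,μ)
    (hP0c : ∀ (t : Fin T) (u : W), Continuous fun z : A0 × ProbabilityMeasure (S × A1) =>
      P0c t u z.1 z.2)
    -- continuity of the minor player's rewards
    (hf1 : ∀ (t : Fin T) (u : W), Continuous fun z : S × A1 × ProbabilityMeasure (S × A1) =>
      f1 t z.1 u z.2.1 z.2.2)
    (hg1 : ∀ u : W, Continuous fun z : S × ProbabilityMeasure S => g1 z.1 u z.2)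
    (α0seq : ℕ → Fin T → W → ProbabilityMeasure A0)
    (α0 : Fin T → W → ProbabilityMeasure A0)
    (μseq : ℕ → (Fin T → W → ProbabilityMeasure (S × A1)) × (W → ProbabilityMeasure S))
    (μf : (Fin T → W → ProbabilityMeasure (S × A1)) × (W → ProbabilityMeasure S))
    (hα0 : Tendsto α0seq atTop (𝓝 α0))
    (hμ : Tendsto μseq atTop (𝓝 μf)) :
    ∀ t ≤ T, TendstoUniformly
      (fun n (q : S × W) => Vtimec P0c P1c f1 g1 (α0seq n) (μseq n) t q.1 q.2)
      (fun q : S × W => Vtimec P0c P1c f1 g1 α0 μf t q.1 q.2) atTop := by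
  intro t _
  have hslices : Continuous fun p : ((MajorControl T W A0 × MeanFieldFlow T S W A1) × S) × W =>
      Vauxc P0c P1c f1 g1 p.1.1.1 p.1.1.2 (T - t) p.1.2 p.2 :=
    continuous_prod_of_discrete_right.2 (continuous_Vauxc P0c P1c f1 g1 hP1c hP0c hf1 hg1 (T - t))
  have hV : Continuous fun p : (MajorControl T W A0 × MeanFieldFlow T S W A1) × (S × W) =>
      Vtimec P0c P1c f1 g1 p.1.1 p.1.2 t p.2.1 p.2.2 :=
    hslices.comp ((continuous_fst.prodMk continuous_snd.fst).prodMk continuous_snd.snd)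
  exact Continuous.tendstoUniformly_of_tendsto
    (F := fun y (q : S × W) => Vtimec P0c P1c f1 g1 y.1 y.2 t q.1 q.2) hV (hα0.prodMk_nhds hμ)

/-- STATEMENT 18: In the control framework, under the continuity assumptions on `P⁰`
(in `(a,μ)`) and on `P¹`, `f¹` and `g¹`, if `(α⁰ⁿ,μⁿ) → (α⁰,μ)` in `𝒜⁰ × C_μ`, then for
each `t ∈ 𝕋` the minor player's value functions converge uniformly:
`sup_{(x,u) ∈ S×W} |V^{1,α⁰ⁿ,μⁿ}_t(x,u) − V^{1,α⁰,μ}_t(x,u)| → 0`. -/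
theorem minor_value_functions_converge_uniformly
    {S W A0 A1 : Type*}
    [MetricSpace S] [CompactSpace S] [Nonempty S]
    [MeasurableSpace S] [BorelSpace S] [SecondCountableTopology S]
    [Fintype W] [Nonempty W] [TopologicalSpace W] [DiscreteTopology W]
    [MeasurableSpace W] [BorelSpace W]
    [MetricSpace A0] [CompactSpace A0] [Nonempty A0] [MeasurableSpace A0] [BorelSpace A0]
    [MetricSpace A1] [CompactSpace A1] [Nonempty A1] [MeasurableSpace A1] [BorelSpace A1]
    [SecondCountableTopology A1]
    {T : ℕ}
    (P0c : Fin T → W → A0 → ProbabilityMeasure (S × A1) → ProbabilityMeasure W)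
    (P1c : Fin T → S → W → A1 → ProbabilityMeasure (S × A1) → ProbabilityMeasure S)
    (f1 : Fin T → S → W → A1 → ProbabilityMeasure (S × A1) → ℝ)
    (g1 : S → W → ProbabilityMeasure S → ℝ)
    -- continuity of the minor player's transition kernel in (x,a,μ)
    (hP1c : ∀ (t : Fin T) (u : W), Continuous fun z : S × A1 × ProbabilityMeasure (S × A1) =>
      P1c t z.1 u z.2.1 z.2.2)
    -- continuity of the major player's transition kernel in (a,μ)
    (hP0c : ∀ (t : Fin T) (u : W), Continuous fun z : A0 × ProbabilityMeasure (S × A1) =>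
      P0c t u z.1 z.2)
    -- continuity of the minor player's rewards
    (hf1 : ∀ (t : Fin T) (u : W), Continuous fun z : S × A1 × ProbabilityMeasure (S × A1) =>
      f1 t z.1 u z.2.1 z.2.2)
    (hg1 : ∀ u : W, Continuous fun z : S × ProbabilityMeasure S => g1 z.1 u z.2)
    (α0seq : ℕ → Fin T → W → ProbabilityMeasure A0)
    (α0 : Fin T → W → ProbabilityMeasure A0)
    (μseq : ℕ → (Fin T → W → ProbabilityMeasure (S × A1)) × (W → ProbabilityMeasure S))
    (μf : (Fin T → W → ProbabilityMeasure (S × A1)) × (W → ProbabilityMeasure S))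
    (hα0 : Tendsto α0seq atTop (𝓝 α0))
    (hμ : Tendsto μseq atTop (𝓝 μf)) :
    ∀ t ≤ T, TendstoUniformly
      (fun n (q : S × W) => Vtimec P0c P1c f1 g1 (α0seq n) (μseq n) t q.1 q.2)
      (fun q : S × W => Vtimec P0c P1c f1 g1 α0 μf t q.1 q.2) atTop :=
  minor_value_functions_converge_uniformly_general P0c P1c f1 g1 hP1c hP0c hf1 hg1 α0seq α0 μseq μf
    hα0 hμ
end
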